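/- arXiv:2407.00970 — 5 statements merged into one kernel-verified Lean document; each statement's English description precedes it below -/
import Mathlib

section
/- Let f : ℝ → ℂ be a Schwartz function whose Fourier transform F f(ξ) := ∫_ℝ f(x) e^{−i ξ x} dx vanishes for all ξ with |ξ| ≥ π. Then ∫_ℝ f(x) · sgn(cos(πx)) dx = 0. -/
open MeasureTheory Function Real
open scoped FourierTransform SchwartzMap

/-!
Substituting `x = 2u` turns `sgn cos(πx)` into `g(u) = sgn cos(2πu)`, which satisfies
`g(u + 1/2) = -g(u)` and hence is 1-periodic with mean zero, and turns the spectral hypothesis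
into the vanishing of `𝓕 f₂` at every nonzero integer, where `f₂(u) = f(2u)` (Mathlib's `𝓕` uses
the kernel `e^{-2πixξ}`). By Poisson summation the periodization `∑ₙ f₂(u + n)` is then the
constant `𝓕 f₂ 0`, so unfolding `∫ f₂ g` over one period gives `𝓕 f₂ 0 · ∫₀¹ g = 0`.
-/

@[fun_prop]
theorem Real.measurable_sign : Measurable Real.sign :=
  Measurable.ite measurableSet_Iio measurable_const
    (Measurable.ite measurableSet_Ioi measurable_const measurable_const)

theorem Real.abs_sign_le_one (r : ℝ) : |Real.sign r| ≤ 1 := by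
  rcases Real.sign_apply_eq r with h | h | h <;> simp [h]

theorem Function.Antiperiodic.intervalIntegral_eq_zero {E : Type*} [NormedAddCommGroup E]
    [NormedSpace ℝ E] {g : ℝ → E} {c : ℝ} (hg : Antiperiodic g c) (t : ℝ) :
    ∫ x in t..t + 2 * c, g x = 0 := by
  set I := ∫ x in t..t + 2 * c, g x
  have h : I = -I := calc
    I = ∫ x in t + c..t + c + 2 * c, g x := hg.periodic_two_mul.intervalIntegral_add_eq t (t + c)
    _ = ∫ x in t..t + 2 * c, g (x + c) := by
      rw [intervalIntegral.integral_comp_add_right]; ring_nf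
    _ = -I := by simp only [hg _, intervalIntegral.integral_neg, I]
  have h2 : (2 : ℝ) • I = 0 := by rw [two_smul]; nth_rw 2 [h]; exact add_neg_cancel I
  exact (smul_eq_zero.mp h2).resolve_left two_ne_zero

theorem integral_mul_periodic_eq_intervalIntegral_tsum_mul {𝕜 : Type*} [RCLike 𝕜]
    {f g : ℝ → 𝕜} (hf : Integrable f) (hg : Periodic g 1) (hgm : AEStronglyMeasurable g)
    {C : ℝ} (hgC : ∀ x, ‖g x‖ ≤ C) :
    ∫ x, f x * g x = ∫ u in (0 : ℝ)..1, (∑' n : ℤ, f (u + n)) * g u := by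
  have hperiod (u : ℝ) (n : ℤ) : g (u + n) = g u := by simpa using hg.int_mul n u
  have hint (n : ℤ) : IntegrableOn (fun u => f (u + n) * g u) (Set.Ioc 0 1) :=
    ((hf.comp_add_right n).mul_bdd hgm (ae_of_all _ hgC)).integrableOn
  have hsum : Summable fun n : ℤ => ∫ u in Set.Ioc (0 : ℝ) 1, ‖f (u + n) * g u‖ := by
    refine .of_nonneg_of_le (fun n => integral_nonneg fun u => norm_nonneg _) (fun n => ?_)
      (hf.norm.hasSum_intervalIntegral_comp_add_int.summable.mul_right C)
    rw [intervalIntegral.integral_of_le zero_le_one, ← integral_mul_const]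
    refine integral_mono_of_nonneg (ae_of_all _ fun u => norm_nonneg _)
      ((hf.comp_add_right n).norm.integrableOn.mul_const C) (ae_of_all _ fun u => ?_)
    simpa only [norm_mul] using mul_le_mul_of_nonneg_left (hgC u) (norm_nonneg (f (u + n)))
  calc ∫ x, f x * g x = ∑' n : ℤ, ∫ u in (0 : ℝ)..1, f (u + n) * g (u + n) :=
        (hf.mul_bdd hgm (ae_of_all _ hgC)).hasSum_intervalIntegral_comp_add_int.tsum_eq.symm
    _ = ∑' n : ℤ, ∫ u in Set.Ioc (0 : ℝ) 1, f (u + n) * g u := by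
        simp only [hperiod, intervalIntegral.integral_of_le zero_le_one]
    _ = ∫ u in Set.Ioc (0 : ℝ) 1, ∑' n : ℤ, f (u + n) * g u :=
        (hasSum_integral_of_summable_integral_norm hint hsum).tsum_eq
    _ = ∫ u in (0 : ℝ)..1, (∑' n : ℤ, f (u + n)) * g u := by
        simp only [tsum_mul_right, intervalIntegral.integral_of_le zero_le_one]

theorem SchwartzMap.tsum_comp_add_int_eq_fourier_zero (f : 𝓢(ℝ, ℂ))
    (hf : ∀ n : ℤ, n ≠ 0 → 𝓕 (f : ℝ → ℂ) n = 0) (x : ℝ) :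
    ∑' n : ℤ, f (x + n) = 𝓕 (f : ℝ → ℂ) 0 := by
  rw [f.tsum_eq_tsum_fourier, tsum_eq_single 0 fun n hn => by
    rw [SchwartzMap.fourier_coe, hf n hn, zero_mul]]
  simp [SchwartzMap.fourier_coe]

theorem Real.fourier_comp_mul_left {E : Type*} [NormedAddCommGroup E] [NormedSpace ℂ E]
    (f : ℝ → E) {a : ℝ} (ha : a ≠ 0) (ξ : ℝ) :
    𝓕 (fun x => f (a * x)) ξ = |a⁻¹| • 𝓕 f (a⁻¹ * ξ) := by
  rw [fourier_real_eq, fourier_real_eq, ← Measure.integral_comp_mul_left _ a]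
  congr with x
  rw [mul_mul_mul_comm, mul_inv_cancel₀ ha, one_mul]

theorem Real.fourier_eq_integral_mul_exp (f : ℝ → ℂ) (ξ : ℝ) :
    𝓕 f ξ = ∫ x, f x * Complex.exp (-(Complex.I * ↑(2 * π * ξ) * x)) := by
  rw [fourier_real_eq_integral_exp_smul]
  congr with x
  rw [smul_eq_mul, mul_comm]
  congr 2
  push_cast
  ring

theorem SchwartzMap.integral_mul_periodic_eq_fourier_zero_mul (f : 𝓢(ℝ, ℂ))
    (hf : ∀ n : ℤ, n ≠ 0 → 𝓕 (f : ℝ → ℂ) n = 0) {g : ℝ → ℂ} (hg : Periodic g 1)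
    (hgm : AEStronglyMeasurable g) {C : ℝ} (hgC : ∀ x, ‖g x‖ ≤ C) :
    ∫ x, f x * g x = 𝓕 (f : ℝ → ℂ) 0 * ∫ u in (0 : ℝ)..1, g u := by
  simp only [integral_mul_periodic_eq_intervalIntegral_tsum_mul f.integrable hg hgm hgC,
    f.tsum_comp_add_int_eq_fourier_zero hf, intervalIntegral.integral_const_mul]

theorem SchwartzMap.integral_mul_antiperiodic_eq_zero (f : 𝓢(ℝ, ℂ))
    (hf : ∀ n : ℤ, n ≠ 0 → 𝓕 (f : ℝ → ℂ) n = 0) {g : ℝ → ℂ} (hg : Antiperiodic g (1 / 2))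
    (hgm : AEStronglyMeasurable g) {C : ℝ} (hgC : ∀ x, ‖g x‖ ≤ C) :
    ∫ x, f x * g x = 0 := by
  have h_two_mul : (2 : ℝ) * (1 / 2) = 1 := by norm_num
  have hmean : ∫ u in (0 : ℝ)..1, g u = 0 := by
    simpa only [h_two_mul, zero_add] using hg.intervalIntegral_eq_zero 0
  rw [f.integral_mul_periodic_eq_fourier_zero_mul hf (h_two_mul ▸ hg.periodic_two_mul) hgm hgC,
    hmean, mul_zero]

theorem antiperiodic_sign_cos_two_pi_mul :
    Antiperiodic (fun u : ℝ => (Real.sign (cos (2 * π * u)) : ℂ)) (1 / 2) := by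
  intro u
  simp only [show 2 * π * (u + 1 / 2) = 2 * π * u + π by ring, Real.cos_add_pi, Real.sign_neg,
    Complex.ofReal_neg]

/-- If `f` is a Schwartz function whose Fourier transform
`ξ ↦ ∫ f(x) e^{−iξx} dx` vanishes for `|ξ| ≥ π`, then
`∫ f(x) · sgn(cos(πx)) dx = 0`. -/
theorem integral_against_sgn_cos_eq_zero
    (f : SchwartzMap ℝ ℂ)
    (hf : ∀ ξ : ℝ, Real.pi ≤ |ξ| →
      (∫ x : ℝ, f x * Complex.exp (-(Complex.I * (ξ : ℂ) * (x : ℂ)))) = 0) :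
    (∫ x : ℝ, f x * ((Real.sign (Real.cos (Real.pi * x)) : ℝ) : ℂ)) = 0 := by
  set f₂ : 𝓢(ℝ, ℂ) := SchwartzMap.compCLMOfContinuousLinearEquiv ℂ
    (ContinuousLinearEquiv.smulLeft (Units.mk0 (2 : ℝ) two_ne_zero)) f
  set g : ℝ → ℂ := fun u => (Real.sign (cos (2 * π * u)) : ℂ)
  have hF₂ (n : ℤ) (hn : n ≠ 0) : 𝓕 (f₂ : ℝ → ℂ) n = 0 := by
    rw [show (f₂ : ℝ → ℂ) = fun x => f (2 * x) from rfl, fourier_comp_mul_left _ two_ne_zero,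
      fourier_eq_integral_mul_exp, hf, smul_zero]
    rw [show 2 * π * (2⁻¹ * (n : ℝ)) = π * n by ring, abs_mul, abs_of_pos pi_pos, ← Int.cast_abs]
    exact le_mul_of_one_le_right pi_pos.le (by exact_mod_cast Int.one_le_abs hn)
  have hgC (u : ℝ) : ‖g u‖ ≤ 1 := by
    simpa only [g, Complex.norm_real, Real.norm_eq_abs] using Real.abs_sign_le_one _
  have key : ∫ u, f₂ u * g u = 0 :=
    f₂.integral_mul_antiperiodic_eq_zero hF₂ antiperiodic_sign_cos_two_pi_mul (by fun_prop) hgC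
  have hscale : |(2 : ℝ)⁻¹| • ∫ x, f x * (Real.sign (cos (π * x)) : ℂ) = 0 := by
    rw [← Measure.integral_comp_mul_left (fun x => f x * (Real.sign (cos (π * x)) : ℂ)) 2, ← key]
    congr with u
    rw [show π * (2 * u) = 2 * π * u by ring]
    rfl
  exact (smul_eq_zero.mp hscale).resolve_left (by norm_num)
end

section
/- Let r ≥ 2 and let a₁, …, a_r be pairwise distinct integers. Then ∑_{n∈ℤ} 1/( (n+a₁+1/2)(n+a₂+1/2)⋯(n+a_r+1/2) ) = 0, the sum converging absolutely. -/
open Filter Topology Finset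

/-!
Partial fractions: for `a ≠ b` in `s`, `∏_{c ∈ s} 1/(n+c+x)` equals
`(∏_{s ∖ {b}} − ∏_{s ∖ {a}}) / (b − a)`. By strong induction on `s` this reduces every sum to the
case `|s| = 2`, where `∑ₙ (1/(n+a+x) − 1/(n+b+x))` telescopes to `0` because `1/(n+x) → 0` at
`±∞`. The same identity carries summability up from pairs, which are dominated by
`1/(n+a+x)² + 1/(n+b+x)²`.
-/

section Telescoping

variable {G : Type*} [AddCommGroup G] [TopologicalSpace G] [IsTopologicalAddGroup G] [T2Space G]
  {g : ℤ → G}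

theorem hasSum_int_sub_add_one_of_tendsto (hs : Summable fun n => g n - g (n + 1))
    (hbot : Tendsto g atBot (𝓝 0)) (htop : Tendsto g atTop (𝓝 0)) :
    HasSum (fun n => g n - g (n + 1)) 0 := by
  have hsym : HasSum _ _ (SummationFilter.symmetricIco ℤ) :=
    hs.hasSum.mono_left (SummationFilter.symmetricIco ℤ).le_atTop
  simp only [SummationFilter.hasSum_symmetricIco_int_iff, sum_Ico_int_sub] at hsym
  have hlim : Tendsto (fun N : ℕ => g (-N) - g N) atTop (𝓝 (0 - 0)) :=
    (hbot.comp (tendsto_neg_atTop_atBot.comp tendsto_natCast_atTop_atTop)).sub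
      (htop.comp tendsto_natCast_atTop_atTop)
  rw [sub_zero] at hlim
  simpa [tendsto_nhds_unique hsym hlim] using hs.hasSum

theorem hasSum_int_sub_add_nat_of_tendsto (hs : Summable fun n => g n - g (n + 1))
    (hbot : Tendsto g atBot (𝓝 0)) (htop : Tendsto g atTop (𝓝 0)) (d : ℕ) :
    HasSum (fun n => g n - g (n + d)) 0 := by
  have hshift (k : ℕ) : HasSum (fun n => g (n + k) - g (n + k + 1)) 0 := by
    have hsk : Summable fun n => g (n + k) - g (n + 1 + k) :=
      ((Equiv.addRight (k : ℤ)).summable_iff.2 hs).congr fun n => by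
        simp only [Function.comp_apply, Equiv.coe_addRight, add_right_comm]
    simpa only [add_right_comm _ (1 : ℤ) k] using
      hasSum_int_sub_add_one_of_tendsto (g := fun n => g (n + k)) hsk
      (hbot.comp (tendsto_atBot_add_const_right _ _ tendsto_id))
      (htop.comp (tendsto_atTop_add_const_right _ _ tendsto_id))
  have htelescope (n : ℤ) : g n - g (n + d) = ∑ k ∈ range d, (g (n + k) - g (n + k + 1)) := by
    simpa [add_assoc] using (sum_range_sub' (fun k : ℕ => g (n + k)) d).symm
  simpa [htelescope] using hasSum_sum fun k (_ : k ∈ range d) => hshift k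

end Telescoping

theorem summable_int_one_div_add_sq (c : ℝ) : Summable fun n : ℤ => (1 / ((n : ℝ) + c)) ^ 2 := by
  simpa [Real.rpow_two, sq_abs, one_div_pow] using
    (Real.summable_one_div_int_add_rpow c 2).2 one_lt_two

theorem summable_int_one_div_add_mul_one_div_add (c d : ℝ) :
    Summable fun n : ℤ => 1 / ((n : ℝ) + c) * (1 / ((n : ℝ) + d)) := by
  refine ((summable_int_one_div_add_sq c).add (summable_int_one_div_add_sq d)).of_norm_bounded
    fun n => ?_
  set u := 1 / ((n : ℝ) + c)
  set v := 1 / ((n : ℝ) + d)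
  rw [Real.norm_eq_abs, abs_mul]
  nlinarith [two_mul_le_add_sq |u| |v|, sq_abs u, sq_abs v, abs_nonneg u, abs_nonneg v]

noncomputable def recipProd (x : ℝ) (s : Finset ℤ) (n : ℤ) : ℝ := ∏ c ∈ s, 1 / ((n : ℝ) + c + x)

section

variable {x : ℝ} (hx : ∀ n : ℤ, (n : ℝ) + x ≠ 0)
include hx

theorem intCast_add_intCast_add_ne_zero (n c : ℤ) : (n : ℝ) + c + x ≠ 0 := by
  exact_mod_cast hx (n + c)

theorem hasSum_one_div_sub_one_div (a b : ℤ) :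
    HasSum (fun n : ℤ => 1 / ((n : ℝ) + a + x) - 1 / ((n : ℝ) + b + x)) 0 := by
  wlog hab : a ≤ b
  · simpa using (this hx b a (by omega)).neg
  obtain ⟨d, rfl⟩ := Int.le.dest hab
  have hs : Summable fun n : ℤ => 1 / ((n : ℝ) + a + x) - 1 / (((n + 1 : ℤ) : ℝ) + a + x) := by
    refine (summable_int_one_div_add_mul_one_div_add (a + x) (a + x + 1)).congr fun n => ?_
    have hn := intCast_add_intCast_add_ne_zero hx n a
    have hn1 := intCast_add_intCast_add_ne_zero hx (n + 1) a
    push_cast at hn1 ⊢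
    simp only [one_div]
    rw [inv_sub_inv' hn hn1]
    ring
  have htop : Tendsto (fun n : ℤ => 1 / ((n : ℝ) + a + x)) atTop (𝓝 0) := by
    simpa only [one_div, Function.comp_def] using tendsto_inv_atTop_zero.comp <|
      tendsto_atTop_add_const_right _ x <|
        tendsto_atTop_add_const_right _ (a : ℝ) tendsto_intCast_atTop_atTop
  have hbot : Tendsto (fun n : ℤ => 1 / ((n : ℝ) + a + x)) atBot (𝓝 0) := by
    simpa only [one_div, Function.comp_def, id] using tendsto_inv_atBot_zero.comp <|
      tendsto_atBot_add_const_right _ x <|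
        tendsto_atBot_add_const_right _ (a : ℝ) (tendsto_intCast_atBot_iff.2 tendsto_id)
  refine (hasSum_int_sub_add_nat_of_tendsto hs hbot htop d).congr_fun fun n => ?_
  push_cast
  ring_nf

theorem recipProd_eq_sub_div {s : Finset ℤ} {a b : ℤ} (ha : a ∈ s) (hb : b ∈ s) (hab : a ≠ b)
    (n : ℤ) :
    recipProd x s n = (recipProd x (s.erase b) n - recipProd x (s.erase a) n) / (b - a) := by
  have hbs : b ∈ s.erase a := mem_erase.2 ⟨hab.symm, hb⟩
  have has : a ∈ s.erase b := mem_erase.2 ⟨hab, ha⟩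
  set u := 1 / ((n : ℝ) + a + x)
  set v := 1 / ((n : ℝ) + b + x)
  set P := recipProd x ((s.erase a).erase b) n
  have hs : recipProd x s n = u * (v * P) := by
    rw [recipProd, ← mul_prod_erase s _ ha, ← mul_prod_erase _ _ hbs]; rfl
  have hsa : recipProd x (s.erase a) n = v * P := by
    rw [recipProd, ← mul_prod_erase _ _ hbs]; rfl
  have hsb : recipProd x (s.erase b) n = u * P := by
    rw [recipProd, ← mul_prod_erase _ _ has, erase_right_comm]; rfl
  have hba : (b : ℝ) - a ≠ 0 := sub_ne_zero.2 (Int.cast_injective.ne hab.symm)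
  have hna := intCast_add_intCast_add_ne_zero hx n a
  have hnb := intCast_add_intCast_add_ne_zero hx n b
  rw [hs, hsa, hsb]
  simp only [u, v]
  field_simp
  ring

theorem hasSum_recipProd_zero_of_erase {s : Finset ℤ} {a b : ℤ} (ha : a ∈ s) (hb : b ∈ s)
    (hab : a ≠ b) (h : HasSum (fun n => recipProd x (s.erase b) n - recipProd x (s.erase a) n) 0) :
    HasSum (recipProd x s) 0 := by
  simpa [← recipProd_eq_sub_div hx ha hb hab] using h.div_const ((b : ℝ) - a)

theorem hasSum_recipProd_zero {s : Finset ℤ} (hs : 2 ≤ s.card) : HasSum (recipProd x s) 0 := by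
  induction s using Finset.strongInduction with | H s ih =>
  rcases hs.eq_or_lt with hs2 | hs3
  · obtain ⟨a, b, hab, rfl⟩ := card_eq_two.1 hs2.symm
    refine hasSum_recipProd_zero_of_erase hx (mem_insert_self a {b})
      (mem_insert_of_mem (mem_singleton_self b)) hab ?_
    simpa [recipProd, erase_insert_of_ne hab, erase_insert_eq_erase, hab] using
      hasSum_one_div_sub_one_div hx a b
  · obtain ⟨a, ha, b, hb, hab⟩ := one_lt_card.1 (by omega : 1 < s.card)
    refine hasSum_recipProd_zero_of_erase hx ha hb hab ?_
    simpa using (ih _ (erase_ssubset hb) (by rw [card_erase_of_mem hb]; omega)).sub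
      (ih _ (erase_ssubset ha) (by rw [card_erase_of_mem ha]; omega))

end

theorem intCast_add_half_ne_zero (n : ℤ) : (n : ℝ) + 1 / 2 ≠ 0 := by
  intro h
  have : ((2 * n + 1 : ℤ) : ℝ) = 0 := by push_cast; linarith
  have : 2 * n + 1 = 0 := by exact_mod_cast this
  omega

/-- For `r ≥ 2` and pairwise distinct integers `a₁, …, a_r`,
`∑_{n∈ℤ} ∏_i 1/(n+a_i+1/2) = 0`, the sum converging absolutely. -/
theorem sum_partial_fractions_distinct_eq_zero
    (r : ℕ) (hr : 2 ≤ r) (a : Fin r → ℤ) (ha : Function.Injective a) :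
    (Summable fun n : ℤ => ∏ i : Fin r, 1 / ((n : ℝ) + (a i : ℝ) + 1 / 2)) ∧
      (∑' n : ℤ, ∏ i : Fin r, 1 / ((n : ℝ) + (a i : ℝ) + 1 / 2)) = 0 := by
  have hcard : 2 ≤ (univ.image a).card := by
    rwa [card_image_of_injective _ ha, card_univ, Fintype.card_fin]
  have hsum := hasSum_recipProd_zero intCast_add_half_ne_zero hcard
  have hprod (n : ℤ) :
      ∏ i, 1 / ((n : ℝ) + (a i : ℝ) + 1 / 2) = recipProd (1 / 2) (univ.image a) n :=
    (prod_image (f := fun c : ℤ => 1 / ((n : ℝ) + c + 1 / 2)) fun i _ j _ hij => ha hij).symm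
  simp only [hprod]
  exact ⟨hsum.summable, hsum.tsum_eq⟩
end

section
/- For integers k, n ≥ 1 let a_{k,n} := 1/(n+k+1/2) + 1/(n−k+1/2). Then for all integers m, n ≥ 1, ∑_{k=1}^∞ a_{k,n}·a_{k,m} = π²·δ_{n,m} − 2/( (n+1/2)(m+1/2) ), where δ_{n,m} is the Kronecker delta and the series converges absolutely. -/
/-!
Put `x = n + 1/2`, so that `a_{k,n} = 1/(x+k) + 1/(x-k)`. Partial fractions in `k` write
`a_{k,n} a_{k,m}` as a combination of `a_{k,n}` and `a_{k,m}` when `n ≠ m`, and `a_{k,n}²` as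
`1/(x+k)² + 1/(x-k)² + a_{k,n}/x`. The Mittag-Leffler expansion of the cotangent gives
`∑_k a_{k,n} = π cot (π x) - 1/x = -1/x`, since the cotangent vanishes at half-integers. Finally
`∑_{j ∈ ℤ} 1/(x+j)² = π²` for every half-integer `x`: the sum is invariant under integer
translation, and at `x = 1/2` it is `8 ∑_{j ≥ 0} 1/(2j+1)²`, eight times the odd part of
`ζ(2) = π²/6`.
-/

/-- The matrix entries `a_{k,n} = 1/(n+k+1/2) + 1/(n−k+1/2)`, for `k, n ≥ 1`. -/
noncomputable def aMat (k n : ℕ) : ℝ :=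
  1 / ((n : ℝ) + (k : ℝ) + 1 / 2) + 1 / ((n : ℝ) - (k : ℝ) + 1 / 2)

open Real

lemma int_add_half_ne_int (n j : ℤ) : (n : ℝ) + 1 / 2 ≠ j := by
  intro h
  have : ((2 * n + 1 : ℤ) : ℝ) = ((2 * j : ℤ) : ℝ) := by push_cast; linarith
  have := Int.cast_injective this
  omega

section PartialFractions

variable {K : Type*} [Field K] {x y u : K}

theorem one_div_add_one_div_sub_mul_self (hx : x ≠ 0) (hxu : x + u ≠ 0) (hxu' : x - u ≠ 0) :
    (1 / (x + u) + 1 / (x - u)) * (1 / (x + u) + 1 / (x - u))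
      = 1 / (x + u) ^ 2 + 1 / (x - u) ^ 2 + 1 / x * (1 / (x + u) + 1 / (x - u)) := by
  field_simp
  ring

theorem one_div_add_one_div_sub_mul (hxy : x - y ≠ 0) (hxy' : x + y ≠ 0) (hxu : x + u ≠ 0)
    (hxu' : x - u ≠ 0) (hyu : y + u ≠ 0) (hyu' : y - u ≠ 0) :
    (1 / (x + u) + 1 / (x - u)) * (1 / (y + u) + 1 / (y - u))
      = 1 / (x - y) * ((1 / (y + u) + 1 / (y - u)) - (1 / (x + u) + 1 / (x - u)))
        + 1 / (x + y) * ((1 / (x + u) + 1 / (x - u)) + (1 / (y + u) + 1 / (y - u))) := by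
  field_simp
  ring

end PartialFractions

lemma Real.hasSum_cot_series {x : ℝ} (hx : ∀ j : ℤ, x ≠ j) :
    HasSum (fun k : ℕ => 1 / (x + (k + 1)) + 1 / (x - (k + 1))) (π * cot (π * x) - 1 / x) := by
  have hxC : (x : ℂ) ∈ Complex.integerComplement := by
    rintro ⟨j, hj⟩
    exact hx j (by exact_mod_cast hj.symm)
  rw [← Complex.hasSum_ofReal]
  have := (Summable.hasSum_iff_tendsto_nat (summable_cotTerm hxC)).mpr
    (tendsto_logDeriv_euler_cot_sub hxC)
  convert this using 1
  · ext k
    simp only [cotTerm, Complex.ofReal_add, Complex.ofReal_div, Complex.ofReal_one,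
      Complex.ofReal_sub, Complex.ofReal_natCast]
    ring
  · push_cast [Complex.ofReal_cot]
    rfl

lemma Real.cot_pi_mul_int_add_half (n : ℤ) : cot (π * (n + 1 / 2)) = 0 := by
  rw [cot_eq_cos_div_sin, cos_eq_zero_iff.mpr ⟨n, by ring⟩, zero_div]

lemma hasSum_one_div_odd_sq :
    HasSum (fun k : ℕ => 1 / ((2 * k + 1 : ℕ) : ℝ) ^ 2) (π ^ 2 / 8) := by
  have hζ := hasSum_zeta_two
  have heven : HasSum (fun k : ℕ => 1 / ((2 * k : ℕ) : ℝ) ^ 2) (π ^ 2 / 24) := by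
    rw [show π ^ 2 / 24 = 1 / 4 * (π ^ 2 / 6) by ring]
    refine (hζ.mul_left (1 / 4)).congr_fun fun k => ?_
    push_cast
    ring
  have hinj : Function.Injective (fun k : ℕ => 2 * k + 1) := fun a b h => by simp at h; omega
  obtain ⟨b, hodd⟩ := hζ.summable.comp_injective hinj
  have hsum := HasSum.even_add_odd (f := fun n : ℕ => 1 / (n : ℝ) ^ 2) heven hodd
  obtain rfl : b = π ^ 2 / 8 := by linarith [hsum.unique hζ]
  exact hodd

lemma hasSum_one_div_nat_add_half_sq :
    HasSum (fun k : ℕ => 1 / ((k : ℝ) + 1 / 2) ^ 2) (π ^ 2 / 2) := by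
  rw [show π ^ 2 / 2 = 4 * (π ^ 2 / 8) by ring]
  refine (hasSum_one_div_odd_sq.mul_left 4).congr_fun fun k => ?_
  push_cast
  field_simp
  ring

lemma hasSum_one_div_int_add_half_sq (n : ℤ) :
    HasSum (fun j : ℤ => 1 / ((n : ℝ) + 1 / 2 + j) ^ 2) (π ^ 2) := by
  have h₀ : HasSum (fun j : ℤ => 1 / ((j : ℝ) + 1 / 2) ^ 2) (π ^ 2) := by
    rw [show π ^ 2 = π ^ 2 / 2 + π ^ 2 / 2 by ring]
    refine HasSum.of_nat_of_neg_add_one ?_ ?_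
    · simpa using hasSum_one_div_nat_add_half_sq
    · refine hasSum_one_div_nat_add_half_sq.congr_fun fun k => ?_
      push_cast
      ring
  refine ((Equiv.addLeft n).hasSum_iff.mpr h₀).congr_fun fun j => ?_
  simp only [Equiv.coe_addLeft, Function.comp_apply, Int.cast_add]
  ring

lemma hasSum_one_div_add_sq_add_one_div_sub_sq (n : ℤ) :
    HasSum
      (fun k : ℕ => 1 / ((n : ℝ) + 1 / 2 + (k + 1)) ^ 2 + 1 / ((n : ℝ) + 1 / 2 - (k + 1)) ^ 2)
      (π ^ 2 - 1 / ((n : ℝ) + 1 / 2) ^ 2) := by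
  have h := (hasSum_nat_add_iff' 1).mpr (hasSum_one_div_int_add_half_sq n).nat_add_neg
  simp only [Finset.sum_range_one, Nat.cast_zero, Int.cast_zero, neg_zero, add_zero] at h
  set x : ℝ := n + 1 / 2
  rw [show π ^ 2 + 1 / x ^ 2 - (1 / x ^ 2 + 1 / x ^ 2) = π ^ 2 - 1 / x ^ 2 by ring] at h
  refine h.congr_fun fun k => ?_
  push_cast
  ring

lemma aMat_succ (k n : ℕ) :
    aMat (k + 1) n = 1 / ((n : ℝ) + 1 / 2 + (k + 1)) + 1 / ((n : ℝ) + 1 / 2 - (k + 1)) := by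
  simp only [aMat]
  push_cast
  ring_nf

lemma add_half_sub_succ_ne_zero (n k : ℕ) : (n : ℝ) + 1 / 2 - (k + 1) ≠ 0 :=
  sub_ne_zero.mpr (by simpa using int_add_half_ne_int n (k + 1))

lemma hasSum_aMat (n : ℕ) :
    HasSum (fun k : ℕ => aMat (k + 1) n) (-(1 / ((n : ℝ) + 1 / 2))) := by
  have h := Real.hasSum_cot_series (int_add_half_ne_int n)
  rw [Real.cot_pi_mul_int_add_half, mul_zero, zero_sub] at h
  simpa only [aMat_succ, Int.cast_natCast] using h

lemma hasSum_aMat_mul_self (n : ℕ) :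
    HasSum (fun k : ℕ => aMat (k + 1) n * aMat (k + 1) n)
      (π ^ 2 - 2 / (((n : ℝ) + 1 / 2) * ((n : ℝ) + 1 / 2))) := by
  set x : ℝ := n + 1 / 2
  have hx : x ≠ 0 := by positivity
  have h :=
    (hasSum_one_div_add_sq_add_one_div_sub_sq n).add ((hasSum_aMat n).mul_left (1 / x))
  rw [Int.cast_natCast, show π ^ 2 - 1 / x ^ 2 + 1 / x * -(1 / x) = π ^ 2 - 2 / (x * x) by
    field_simp; ring] at h
  refine h.congr_fun fun k => ?_
  rw [aMat_succ]
  exact one_div_add_one_div_sub_mul_self hx (by positivity) (add_half_sub_succ_ne_zero n k)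

lemma hasSum_aMat_mul {m n : ℕ} (hnm : n ≠ m) :
    HasSum (fun k : ℕ => aMat (k + 1) n * aMat (k + 1) m)
      (-(2 / (((n : ℝ) + 1 / 2) * ((m : ℝ) + 1 / 2)))) := by
  set x : ℝ := n + 1 / 2
  set y : ℝ := m + 1 / 2
  have hx : x ≠ 0 := by positivity
  have hy : y ≠ 0 := by positivity
  have hxy : x - y ≠ 0 := by simpa [x, y, sub_eq_zero] using hnm
  have hxy' : x + y ≠ 0 := by positivity
  have h := (((hasSum_aMat m).sub (hasSum_aMat n)).mul_left (1 / (x - y))).add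
    (((hasSum_aMat n).add (hasSum_aMat m)).mul_left (1 / (x + y)))
  rw [show 1 / (x - y) * (-(1 / y) - -(1 / x)) + 1 / (x + y) * (-(1 / x) + -(1 / y))
    = -(2 / (x * y)) by field_simp; ring] at h
  refine h.congr_fun fun k => ?_
  rw [aMat_succ, aMat_succ]
  exact one_div_add_one_div_sub_mul hxy hxy' (by positivity) (add_half_sub_succ_ne_zero n k)
    (by positivity) (add_half_sub_succ_ne_zero m k)

theorem aMat_column_inner_product_general
    (m n : ℕ) :
    (Summable fun k : ℕ => aMat (k + 1) n * aMat (k + 1) m) ∧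
      (∑' k : ℕ, aMat (k + 1) n * aMat (k + 1) m)
        = Real.pi ^ 2 * (if n = m then (1 : ℝ) else 0)
          - 2 / (((n : ℝ) + 1 / 2) * ((m : ℝ) + 1 / 2)) := by
  by_cases hnm : n = m
  · subst hnm
    have h := hasSum_aMat_mul_self n
    rw [if_pos rfl, mul_one]
    exact ⟨h.summable, h.tsum_eq⟩
  · have h := hasSum_aMat_mul hnm
    rw [if_neg hnm, mul_zero, zero_sub]
    exact ⟨h.summable, h.tsum_eq⟩

/-- For `m, n ≥ 1`: `∑_{k≥1} a_{k,n} a_{k,m} = π² δ_{n,m} − 2/((n+1/2)(m+1/2))`,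
the series converging absolutely. -/
theorem aMat_column_inner_product
    (m n : ℕ) (hm : 1 ≤ m) (hn : 1 ≤ n) :
    (Summable fun k : ℕ => aMat (k + 1) n * aMat (k + 1) m) ∧
      (∑' k : ℕ, aMat (k + 1) n * aMat (k + 1) m)
        = Real.pi ^ 2 * (if n = m then (1 : ℝ) else 0)
          - 2 / (((n : ℝ) + 1 / 2) * ((m : ℝ) + 1 / 2)) :=
  aMat_column_inner_product_general m n
end

section
/- For integers k, n ≥ 1 let a_{k,n} := 1/(n+k+1/2) + 1/(n−k+1/2), and for a square-summable real sequence x define (Ax)_k := ∑_{n=1}^∞ a_{k,n} x_n. Then for every square-summable real sequence x, ∑_{k=1}^∞ (Ax)_k² + 2·( ∑_{n=1}^∞ x_n/(n+1/2) )² = π² ∑_{n=1}^∞ x_n². -/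
/-!
On the circle `ℝ / 2πℤ` the even functions `φ_n(θ) = √2 sin((n + 1/2)|θ|)` are orthonormal in
`L²`, because the `sin((n + 1/2)θ)` are orthogonal on `[0, π]`, and the `k`-th Fourier
coefficient of `φ_n` is `(√2 / 2π) a_{|k|,n}`. Parseval's identity for `∑ₙ xₙ φₙ` therefore reads
`∑_{k ∈ ℤ} (∑ₙ a_{|k|,n} xₙ)² = 2π² ∑ₙ xₙ²`. The terms `k` and `-k` coincide, and the term `k = 0`
is `4 (∑ₙ xₙ / (n + 1/2))²` since `a_{0,n} = 2 / (n + 1/2)`.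
-/

open MeasureTheory Real

theorem HilbertBasis.hasSum_norm_tsum_inner_mul_sq {ι κ 𝕜 E : Type*} [RCLike 𝕜]
    [NormedAddCommGroup E] [InnerProductSpace 𝕜 E] [CompleteSpace E]
    (b : HilbertBasis ι 𝕜 E) {v : κ → E} (hv : Orthonormal 𝕜 v) {x : κ → 𝕜}
    (hx : Summable fun n => ‖x n‖ ^ 2) :
    HasSum (fun k => ‖∑' n, inner 𝕜 (b k) (v n) * x n‖ ^ 2) (∑' n, ‖x n‖ ^ 2) := by
  have hp : 0 < (2 : ENNReal).toReal := by norm_num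
  let f : lp (fun _ : κ => 𝕜) 2 := ⟨x, (memℓp_gen_iff hp).2 (by exact_mod_cast hx)⟩
  set y := hv.orthogonalFamily.linearIsometry f
  have hy : HasSum (fun n => x n • v n) y := by
    simpa only [LinearIsometry.toSpanSingleton_apply] using
      hv.orthogonalFamily.hasSum_linearIsometry f
  have hrepr (k : ι) : b.repr y k = ∑' n, inner 𝕜 (b k) (v n) * x n := by
    have := (hy.mapL (innerSL 𝕜 (b k))).tsum_eq
    simp only [innerSL_apply_apply, inner_smul_right] at this
    simp_rw [b.repr_apply_apply, ← this, mul_comm]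
  have hnorm : ‖b.repr y‖ = ‖f‖ := by simp [y]
  have h := lp.hasSum_norm hp (b.repr y)
  rw [hnorm, ← (lp.hasSum_norm hp f).tsum_eq] at h
  simpa [hrepr] using h

theorem HasSum.nat_succ_of_int_natAbs {G : Type*} [AddCommGroup G] [TopologicalSpace G]
    [IsTopologicalAddGroup G] {g : ℕ → G} {a : G} (h : HasSum (fun k : ℤ => g k.natAbs) a) :
    HasSum (fun n => 2 • g (n + 1)) (a - g 0) := by
  have h2 : HasSum (fun n => 2 • g n) (a + g 0) := by
    simpa [two_nsmul] using h.nat_add_neg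
  have := (hasSum_nat_add_iff' 1).2 h2
  simpa [two_nsmul, add_sub_assoc, sub_eq_add_neg] using this

theorem intervalIntegral.integral_neg_left_eq_integral_add_comp_neg {E : Type*}
    [NormedAddCommGroup E] [NormedSpace ℝ E] {f : ℝ → E} {a : ℝ}
    (hf : IntervalIntegrable f volume (-a) a) :
    ∫ x in -a..a, f x = ∫ x in 0..a, (f x + f (-x)) := by
  have h0 : (0 : ℝ) ∈ Set.uIcc (-a) a := by
    rcases le_total 0 a with h | h <;> simp [h]
  have hleft : IntervalIntegrable f volume (-a) 0 :=
    hf.mono_set (Set.uIcc_subset_uIcc Set.left_mem_uIcc h0)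
  have hright : IntervalIntegrable f volume 0 a :=
    hf.mono_set (Set.uIcc_subset_uIcc h0 Set.right_mem_uIcc)
  have hneg : IntervalIntegrable (fun x => f (-x)) volume 0 a := by
    simpa using ((IntervalIntegrable.iff_comp_neg (f := f)).1 hleft).symm
  rw [intervalIntegral.integral_add hright hneg, intervalIntegral.integral_comp_neg, neg_zero,
    add_comm, intervalIntegral.integral_add_adjacent_intervals hleft hright]

instance : Fact (0 < 2 * π) := ⟨two_pi_pos⟩

theorem fourierCoeff_liftIoc_of_even {f : ℝ → ℂ} (hf : ∀ x, f (-x) = f x)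
    (hi : IntervalIntegrable f volume (-π) π) (k : ℤ) :
    fourierCoeff (AddCircle.liftIoc (2 * π) (-π) f) k
      = (π : ℂ)⁻¹ * ∫ x in 0..π, Real.cos (k * x) * f x := by
  have hexp (x : ℝ) : Complex.exp (2 * π * Complex.I * (-k : ℤ) * x / (-π + 2 * π - -π : ℝ))
      = Complex.exp (-(k * x) * Complex.I) := by
    congr 1
    field_simp
    push_cast
    ring
  have hcos (x : ℝ) : Complex.exp (-(k * x) * Complex.I) * f x
      + Complex.exp (-(k * (-x : ℝ)) * Complex.I) * f (-x) = 2 * (Real.cos (k * x) * f x) := by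
    rw [hf, ← add_mul, ← mul_assoc, Complex.ofReal_cos, Complex.two_cos]
    push_cast
    ring_nf
  rw [fourierCoeff_liftIoc_eq, fourierCoeffOn_eq_integral]
  simp_rw [fourier_coe_apply, hexp, smul_eq_mul]
  rw [show -π + 2 * π = π by ring, intervalIntegral.integral_neg_left_eq_integral_add_comp_neg]
  · simp_rw [hcos]
    rw [intervalIntegral.integral_const_mul, Complex.real_smul]
    push_cast
    field_simp
    ring
  · refine hi.continuousOn_mul (Continuous.continuousOn ?_)
    fun_prop

theorem integral_sin_half_odd_mul (m : ℤ) :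
    ∫ θ in 0..π, sin ((m + 1 / 2) * θ) = (m + 1 / 2 : ℝ)⁻¹ := by
  have hm : (m + 1 / 2 : ℝ) ≠ 0 := by
    have : (2 * m + 1 : ℝ) ≠ 0 := by exact_mod_cast (by omega : 2 * m + 1 ≠ 0)
    contrapose! this
    linarith
  have hcos : cos ((m + 1 / 2) * π) = 0 := cos_eq_zero_iff.2 ⟨m, by ring⟩
  rw [intervalIntegral.integral_comp_mul_left (fun x => sin x) hm, integral_sin, hcos]
  simp

theorem integral_cos_int_mul (j : ℤ) :
    ∫ θ in 0..π, cos (j * θ) = if j = 0 then π else 0 := by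
  split_ifs with hj
  · simp [hj]
  · have hj' : (j : ℝ) ≠ 0 := by exact_mod_cast hj
    rw [intervalIntegral.integral_comp_mul_left (fun x => cos x) hj', integral_cos,
      sin_int_mul_pi]
    simp

theorem integral_sin_mul_cos (n k : ℕ) :
    ∫ θ in 0..π, sin ((n + 1 / 2) * θ) * cos (k * θ) = aMat k n / 2 := by
  have hprod (θ : ℝ) : sin ((n + 1 / 2) * θ) * cos (k * θ)
      = (sin ((((n + k : ℕ) : ℤ) + 1 / 2) * θ) + sin ((((n : ℤ) - k : ℤ) + 1 / 2) * θ)) / 2 := by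
    have h₁ : (((n + k : ℕ) : ℤ) + 1 / 2 : ℝ) * θ = (n + 1 / 2) * θ + k * θ := by push_cast; ring
    have h₂ : ((((n : ℤ) - k : ℤ) : ℝ) + 1 / 2) * θ = (n + 1 / 2) * θ - k * θ := by
      push_cast; ring
    rw [h₁, h₂, sin_add, sin_sub]
    ring
  simp_rw [hprod]
  rw [intervalIntegral.integral_div,
    intervalIntegral.integral_add (Continuous.intervalIntegrable (by fun_prop) _ _)
      (Continuous.intervalIntegrable (by fun_prop) _ _),
    integral_sin_half_odd_mul, integral_sin_half_odd_mul, aMat]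
  push_cast
  ring

theorem integral_sin_mul_sin (n m : ℕ) :
    ∫ θ in 0..π, sin ((n + 1 / 2) * θ) * sin ((m + 1 / 2) * θ) = if n = m then π / 2 else 0 := by
  have hprod (θ : ℝ) : sin ((n + 1 / 2) * θ) * sin ((m + 1 / 2) * θ)
      = (cos (((n - m : ℤ) : ℝ) * θ) - cos (((n + m + 1 : ℤ) : ℝ) * θ)) / 2 := by
    have h₁ : ((n - m : ℤ) : ℝ) * θ = (n + 1 / 2) * θ - (m + 1 / 2) * θ := by push_cast; ring
    have h₂ : ((n + m + 1 : ℤ) : ℝ) * θ = (n + 1 / 2) * θ + (m + 1 / 2) * θ := by push_cast; ring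
    rw [h₁, h₂, cos_add, cos_sub]
    ring
  simp_rw [hprod]
  rw [intervalIntegral.integral_div,
    intervalIntegral.integral_sub (Continuous.intervalIntegrable (by fun_prop) _ _)
      (Continuous.intervalIntegrable (by fun_prop) _ _),
    integral_cos_int_mul, integral_cos_int_mul, if_neg (show (n + m + 1 : ℤ) ≠ 0 by omega)]
  by_cases h : n = m
  · simp [h]
  · simp [h, sub_eq_zero]

noncomputable def sinMode (n : ℕ) : C(AddCircle (2 * π), ℂ) :=
  ⟨AddCircle.liftIoc (2 * π) (-π) fun θ => ((√2 * sin ((n + 1 / 2) * |θ|) : ℝ) : ℂ),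
    AddCircle.liftIoc_continuous (by rw [abs_neg, show -π + 2 * π = π by ring, abs_of_pos pi_pos])
      (Continuous.continuousOn (by fun_prop))⟩

theorem fourierCoeff_sinMode (n : ℕ) (k : ℤ) :
    fourierCoeff (sinMode n) k = ((√2 / (2 * π) * aMat k.natAbs n : ℝ) : ℂ) := by
  have hint : ∫ x in 0..π, (cos (k * x) : ℂ) * ((√2 * sin ((n + 1 / 2) * |x|) : ℝ) : ℂ)
      = ((√2 * ∫ x in 0..π, sin ((n + 1 / 2) * x) * cos (k.natAbs * x) : ℝ) : ℂ) := by
    rw [← intervalIntegral.integral_const_mul, ← intervalIntegral.integral_ofReal]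
    refine intervalIntegral.integral_congr fun x hx => ?_
    rw [Set.uIcc_of_le pi_pos.le] at hx
    have hcos : cos (k * x) = cos (k.natAbs * x) := by
      rw [← cos_abs, abs_mul, abs_of_nonneg hx.1, Nat.cast_natAbs, Int.cast_abs]
    simp only [abs_of_nonneg hx.1, hcos]
    push_cast
    ring
  rw [sinMode, ContinuousMap.coe_mk, fourierCoeff_liftIoc_of_even (fun x => by simp)
    (Continuous.intervalIntegrable (by fun_prop) _ _), hint, integral_sin_mul_cos]
  push_cast
  field_simp

theorem orthonormal_toLp_sinMode :
    Orthonormal ℂ fun n => ContinuousMap.toLp 2 AddCircle.haarAddCircle ℂ (sinMode n) := by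
  rw [orthonormal_iff_ite]
  intro n m
  set g : ℝ → ℂ := fun θ => ((2 * (sin ((m + 1 / 2) * |θ|) * sin ((n + 1 / 2) * |θ|)) : ℝ) : ℂ)
  have hg : (fun z => sinMode m z * (starRingEnd ℂ) (sinMode n z))
      = AddCircle.liftIoc (2 * π) (-π) g := by
    ext z
    simp only [sinMode, ContinuousMap.coe_mk, AddCircle.liftIoc, Function.comp_apply, g,
      Set.domRestrict_apply, Complex.conj_ofReal, ← Complex.ofReal_mul]
    congr 1
    linear_combination (sin ((m + 1 / 2) * |_|) * sin ((n + 1 / 2) * |_|)) *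
      Real.mul_self_sqrt zero_le_two
  have hint : ∫ x in 0..π, (cos ((0 : ℤ) * x) : ℂ) * g x
      = ((2 * ∫ x in 0..π, sin ((n + 1 / 2) * x) * sin ((m + 1 / 2) * x) : ℝ) : ℂ) := by
    rw [← intervalIntegral.integral_const_mul, ← intervalIntegral.integral_ofReal]
    refine intervalIntegral.integral_congr fun x hx => ?_
    rw [Set.uIcc_of_le pi_pos.le] at hx
    simp only [g, abs_of_nonneg hx.1, Int.cast_zero, zero_mul, cos_zero]
    push_cast
    ring
  have h0 : ∫ z, sinMode m z * (starRingEnd ℂ) (sinMode n z) ∂AddCircle.haarAddCircle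
      = fourierCoeff (fun z => sinMode m z * (starRingEnd ℂ) (sinMode n z)) 0 := by
    simp [fourierCoeff]
  rw [ContinuousMap.inner_toLp, h0, hg, fourierCoeff_liftIoc_of_even (fun x => by simp [g])
    (Continuous.intervalIntegrable (by fun_prop) _ _), hint, integral_sin_mul_sin]
  split_ifs
  · push_cast
    field_simp
  · simp

theorem hasSum_sq_tsum_aMat_mul (x : ℕ → ℝ) (hx : Summable fun n => x n ^ 2) :
    HasSum (fun k : ℤ => (∑' n, aMat k.natAbs (n + 1) * x n) ^ 2) (2 * π ^ 2 * ∑' n, x n ^ 2) := by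
  have hv : Orthonormal ℂ
      fun n => ContinuousMap.toLp 2 AddCircle.haarAddCircle ℂ (sinMode (n + 1)) :=
    orthonormal_toLp_sinMode.comp _ (add_left_injective 1)
  have h := fourierBasis.hasSum_norm_tsum_inner_mul_sq hv (x := fun n => (x n : ℂ))
    (by simpa using hx)
  simp only [← HilbertBasis.repr_apply_apply, fourierBasis_repr, fourierCoeff_toLp,
    fourierCoeff_sinMode, ← Complex.ofReal_mul, ← Complex.ofReal_tsum, Complex.norm_real,
    Real.norm_eq_abs, sq_abs, mul_assoc, tsum_mul_left, mul_pow, div_pow,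
    sq_sqrt zero_le_two] at h
  refine (h.mul_left (2 * π ^ 2)).congr_fun fun k => ?_
  field_simp

/-- Here `x n` stands for `x_{n+1}`. -/
theorem aMat_isometry_identity
    (x : ℕ → ℝ) (hx : Summable fun n : ℕ => (x n) ^ 2) :
    (∑' k : ℕ, (∑' n : ℕ, aMat (k + 1) (n + 1) * x n) ^ 2)
        + 2 * (∑' n : ℕ, x n / ((n : ℝ) + 1 + 1 / 2)) ^ 2
      = Real.pi ^ 2 * ∑' n : ℕ, (x n) ^ 2 := by
  have hsum := (hasSum_sq_tsum_aMat_mul x hx).nat_succ_of_int_natAbs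
    (g := fun j => (∑' n, aMat j (n + 1) * x n) ^ 2)
  have hzero : ∑' n, aMat 0 (n + 1) * x n = 2 * ∑' n, x n / ((n : ℝ) + 1 + 1 / 2) := by
    rw [← tsum_mul_left]
    congr with n
    simp only [aMat]
    push_cast
    ring
  have h := hsum.tsum_eq
  simp only [nsmul_eq_mul, Nat.cast_ofNat, tsum_mul_left, hzero] at h
  linear_combination h / 2
end

section
/- For integers k, n ≥ 1 let a_{k,n} := 1/(n+k+1/2) + 1/(n−k+1/2), and for a square-summable real sequence x define (Ax)_k := ∑_{n=1}^∞ a_{k,n} x_n. If x is a square-summable real sequence satisfying ∑_{n=1}^∞ x_n/(n+1/2) = 0, then ‖Ax‖ = π‖x‖; that is, π^{−1}A restricted to the orthogonal complement in ℓ² of the sequence ((n+1/2)^{−1})_{n≥1} is an isometry. -/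
open Filter Topology Finset Asymptotics Real
open scoped ENNReal

theorem HasSum.sub_succ_of_tendsto {G : Type*} [AddCommGroup G] [TopologicalSpace G]
    [IsTopologicalAddGroup G] [T2Space G] {f : ℕ → G} {L : G} (hf : Tendsto f atTop (𝓝 L))
    (hs : Summable fun k ↦ f k - f (k + 1)) : HasSum (fun k ↦ f k - f (k + 1)) (f 0 - L) := by
  rw [hs.hasSum_iff_tendsto_nat]
  simp_rw [Finset.sum_range_sub']
  exact tendsto_const_nhds.sub hf

theorem summable_inv_add_mul_inv_add (a b : ℝ) :
    Summable fun k : ℕ ↦ ((k : ℝ) + a)⁻¹ * ((k : ℝ) + b)⁻¹ := by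
  have h (c : ℝ) : (fun k : ℕ ↦ ((k : ℝ) + c)⁻¹) =O[atTop] fun k : ℕ ↦ (k : ℝ)⁻¹ :=
    (IsEquivalent.refl.add_const_of_norm_tendsto_atTop
      (tendsto_norm_atTop_atTop.comp tendsto_natCast_atTop_atTop)).inv.isBigO
  refine summable_of_isBigO_nat (Real.summable_nat_pow_inv.mpr one_lt_two) ?_
  simpa [sq] using (h a).mul (h b)

theorem hasSum_inv_add_sub_inv_add_succ (c : ℝ) :
    HasSum (fun k : ℕ ↦ ((k : ℝ) + c)⁻¹ - ((k : ℝ) + 1 + c)⁻¹) c⁻¹ := by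
  have hf : Tendsto (fun k : ℕ ↦ ((k : ℝ) + c)⁻¹) atTop (𝓝 0) :=
    (tendsto_atTop_add_const_right _ c tendsto_natCast_atTop_atTop).inv_tendsto_atTop
  have hs : Summable fun k : ℕ ↦ ((k : ℝ) + c)⁻¹ - ((k : ℝ) + 1 + c)⁻¹ := by
    refine (summable_inv_add_mul_inv_add c (1 + c)).congr_atTop ?_
    filter_upwards [(tendsto_atTop_add_const_right _ c
      tendsto_natCast_atTop_atTop).eventually_gt_atTop 0] with k hk
    have hk' : (k : ℝ) + (1 + c) ≠ 0 := by linarith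
    rw [add_assoc, inv_sub_inv hk.ne' hk', div_eq_mul_inv, mul_inv]
    ring
  simpa [add_right_comm] using HasSum.sub_succ_of_tendsto hf (by simpa [add_right_comm] using hs)

theorem hasSum_inv_add_sq_sub_inv_add_succ_sq (c : ℝ) :
    HasSum (fun k : ℕ ↦ ((k : ℝ) + c)⁻¹ ^ 2 - ((k : ℝ) + 1 + c)⁻¹ ^ 2) (c⁻¹ ^ 2) := by
  have hf : Tendsto (fun k : ℕ ↦ ((k : ℝ) + c)⁻¹ ^ 2) atTop (𝓝 0) := by
    simpa using
      ((tendsto_atTop_add_const_right _ c tendsto_natCast_atTop_atTop).inv_tendsto_atTop).pow 2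
  have hs : Summable fun k : ℕ ↦ ((k : ℝ) + c)⁻¹ ^ 2 := by
    simpa [sq] using summable_inv_add_mul_inv_add c c
  simpa [add_right_comm] using
    HasSum.sub_succ_of_tendsto hf (hs.sub ((summable_nat_add_iff 1).mpr hs))

theorem hasSum_inv_add_half_sq : HasSum (fun k : ℕ ↦ ((k : ℝ) + 1 / 2)⁻¹ ^ 2) (π ^ 2 / 2) := by
  set ζ : ℕ → ℝ := fun n ↦ 1 / (n : ℝ) ^ 2
  have heven : HasSum (fun k ↦ ζ (2 * k)) (π ^ 2 / 24) := by
    have h : (fun k ↦ ζ (2 * k)) = fun k ↦ 1 / 4 * ζ k := by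
      ext k; simp only [ζ]; push_cast; ring
    rw [h, show π ^ 2 / 24 = 1 / 4 * (π ^ 2 / 6) by ring]
    exact hasSum_zeta_two.mul_left _
  obtain ⟨L, hodd⟩ : Summable fun k ↦ ζ (2 * k + 1) :=
    hasSum_zeta_two.summable.comp_injective (fun a b h ↦ by simpa using h)
  have hL : L = π ^ 2 / 8 := by linarith [(heven.even_add_odd hodd).unique hasSum_zeta_two]
  have h : (fun k : ℕ ↦ ((k : ℝ) + 1 / 2)⁻¹ ^ 2) = fun k ↦ 4 * ζ (2 * k + 1) := by
    ext k
    have : (2 * k + 1 : ℝ) ≠ 0 := by positivity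
    simp only [ζ]; push_cast; field_simp; ring
  rw [h, show π ^ 2 / 2 = 4 * L by rw [hL]; ring]
  exact hodd.mul_left 4

theorem memℓp_two_iff_summable_sq {ι : Type*} {f : ι → ℝ} :
    Memℓp f 2 ↔ Summable fun i ↦ f i ^ 2 := by
  rw [memℓp_gen_iff (by norm_num)]
  norm_num

theorem lp.norm_sq_eq_tsum_sq {ι : Type*} (f : lp (fun _ : ι ↦ ℝ) 2) :
    ‖f‖ ^ 2 = ∑' i, f i ^ 2 := by
  rw [← real_inner_self_eq_norm_sq, lp.inner_eq_tsum]
  simp [sq]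

theorem lp.tsum_apply {ι α : Type*} {E : α → Type*} [∀ a, NormedAddCommGroup (E a)] {p : ℝ≥0∞}
    [Fact (1 ≤ p)] {F : ι → lp E p} (hF : Summable F) (a : α) :
    (∑' n, F n) a = ∑' n, F n a :=
  (hF.hasSum.map ((Pi.evalAddMonoidHom E a).comp (lp.coeFnAddMonoidHom E p))
    ((continuous_apply a).comp lp.uniformContinuous_coe.continuous)).tsum_eq.symm

theorem summable_mul_of_summable_sq {ι : Type*} {f g : ι → ℝ} (hf : Summable fun i ↦ f i ^ 2)
    (hg : Summable fun i ↦ g i ^ 2) : Summable fun i ↦ f i * g i := by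
  simpa using lp.summable_inner (𝕜 := ℝ)
    (⟨g, memℓp_two_iff_summable_sq.mpr hg⟩ : lp (fun _ : ι ↦ ℝ) 2)
    ⟨f, memℓp_two_iff_summable_sq.mpr hf⟩

section GramSeries

variable {E : Type*} [NormedAddCommGroup E] [InnerProductSpace ℝ E] {u : ℕ → E} {v : ℕ → ℝ}
  {c μ : ℝ}

theorem norm_sq_sum_smul_of_inner_eq
    (hu : ∀ m n, inner ℝ (u m) (u n) = (if m = n then c else 0) - μ * (v m * v n))
    (x : ℕ → ℝ) (s : Finset ℕ) :
    ‖∑ n ∈ s, x n • u n‖ ^ 2 = c * ∑ n ∈ s, x n ^ 2 - μ * (∑ n ∈ s, x n * v n) ^ 2 := by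
  rw [← real_inner_self_eq_norm_sq, sum_inner]
  simp_rw [inner_sum, real_inner_smul_left, real_inner_smul_right, hu, mul_sub, mul_ite, mul_zero,
    sum_sub_distrib, sum_ite_eq]
  congr 1
  · rw [mul_sum]
    exact sum_congr rfl fun i hi ↦ by rw [if_pos hi]; ring
  · rw [sq, sum_mul_sum, mul_sum]
    exact sum_congr rfl fun i _ ↦ by rw [mul_sum]; exact sum_congr rfl fun j _ ↦ by ring

variable [CompleteSpace E]

theorem summable_smul_of_inner_eq
    (hu : ∀ m n, inner ℝ (u m) (u n) = (if m = n then c else 0) - μ * (v m * v n))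
    (hμ : 0 ≤ μ) {x : ℕ → ℝ} (hx : Summable fun n ↦ x n ^ 2) :
    Summable fun n ↦ x n • u n := by
  refine summable_iff_vanishing_norm.mpr fun ε hε ↦ ?_
  obtain ⟨s, hs⟩ := summable_iff_vanishing_norm.mp hx (ε ^ 2 / (|c| + 1)) (by positivity)
  refine ⟨s, fun t ht ↦ pow_lt_pow_iff_left₀ (norm_nonneg _) hε.le two_ne_zero |>.mp ?_⟩
  have hst := hs t ht
  have hnn : 0 ≤ ∑ n ∈ t, x n ^ 2 := sum_nonneg fun n _ ↦ sq_nonneg _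
  rw [Real.norm_of_nonneg hnn, lt_div_iff₀ (by positivity)] at hst
  rw [norm_sq_sum_smul_of_inner_eq hu]
  nlinarith [le_abs_self c, mul_nonneg hμ (sq_nonneg (∑ n ∈ t, x n * v n)), abs_nonneg c]

theorem norm_sq_tsum_smul_of_inner_eq
    (hu : ∀ m n, inner ℝ (u m) (u n) = (if m = n then c else 0) - μ * (v m * v n))
    (hμ : 0 ≤ μ) {x : ℕ → ℝ} (hx : Summable fun n ↦ x n ^ 2)
    (hxv : Summable fun n ↦ x n * v n) :
    ‖∑' n, x n • u n‖ ^ 2 = c * ∑' n, x n ^ 2 - μ * (∑' n, x n * v n) ^ 2 := by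
  have hlhs := ((summable_smul_of_inner_eq hu hμ hx).hasSum.norm).pow 2
  have hrhs := (hx.hasSum.const_mul c).sub ((hxv.hasSum.pow 2).const_mul μ)
  simp_rw [norm_sq_sum_smul_of_inner_eq hu] at hlhs
  exact tendsto_nhds_unique hlhs hrhs

end GramSeries

namespace AMat

noncomputable def column (α : ℝ) (k : ℕ) : ℝ := ((k : ℝ) + 1 + α)⁻¹ - ((k : ℝ) + 1 - α)⁻¹

theorem aMat_eq_column (k n : ℕ) : aMat (k + 1) (n + 1) = column ((n + 1 : ℕ) + 1 / 2) k := by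
  have h : ((n + 1 : ℕ) : ℝ) - ((k + 1 : ℕ) : ℝ) + 1 / 2
      = -((k : ℝ) + 1 - ((n + 1 : ℕ) + 1 / 2)) := by
    push_cast; ring
  rw [aMat, column, h, div_neg, one_div, one_div]
  push_cast
  ring

theorem hasSum_column (p : ℕ) : HasSum (column (p + 1 / 2)) (-((p : ℝ) + 1 / 2)⁻¹) := by
  induction p with
  | zero =>
    have h : column ((0 : ℕ) + 1 / 2)
        = fun k : ℕ ↦ -(((k : ℝ) + 1 / 2)⁻¹ - ((k : ℝ) + 1 + 1 / 2)⁻¹) := by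
      ext k; rw [column]; push_cast; ring
    rw [h, show -(((0 : ℕ) : ℝ) + 1 / 2)⁻¹ = -(1 / 2 : ℝ)⁻¹ by norm_num]
    exact (hasSum_inv_add_sub_inv_add_succ _).neg
  | succ p ih =>
    set α : ℝ := p + 1 / 2
    have h : column ((p + 1 : ℕ) + 1 / 2) = fun k ↦ column α k
        - (((k : ℝ) + (α + 1))⁻¹ - ((k : ℝ) + 1 + (α + 1))⁻¹)
        - (((k : ℝ) + -α)⁻¹ - ((k : ℝ) + 1 + -α)⁻¹) := by
      ext k; simp only [column, α]; push_cast; ring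
    rw [h, show -(((p + 1 : ℕ) : ℝ) + 1 / 2)⁻¹ = -α⁻¹ - (α + 1)⁻¹ - (-α)⁻¹ by
      rw [inv_neg]; push_cast; ring]
    exact (ih.sub (hasSum_inv_add_sub_inv_add_succ _)).sub (hasSum_inv_add_sub_inv_add_succ _)

theorem hasSum_inv_sq_add_inv_sq (p : ℕ) :
    HasSum (fun k : ℕ ↦ ((k : ℝ) + 1 + (p + 1 / 2))⁻¹ ^ 2 + ((k : ℝ) + 1 - (p + 1 / 2))⁻¹ ^ 2)
      (π ^ 2 - ((p : ℝ) + 1 / 2)⁻¹ ^ 2) := by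
  induction p with
  | zero =>
    have h : (fun k : ℕ ↦ ((k : ℝ) + 1 + ((0 : ℕ) + 1 / 2))⁻¹ ^ 2
        + ((k : ℝ) + 1 - ((0 : ℕ) + 1 / 2))⁻¹ ^ 2)
        = fun k : ℕ ↦ (((k + 1 : ℕ) : ℝ) + 1 / 2)⁻¹ ^ 2 + ((k : ℝ) + 1 / 2)⁻¹ ^ 2 := by
      ext k; push_cast; ring
    rw [h, show π ^ 2 - (((0 : ℕ) : ℝ) + 1 / 2)⁻¹ ^ 2
        = (π ^ 2 / 2 - ∑ i ∈ range 1, ((i : ℝ) + 1 / 2)⁻¹ ^ 2) + π ^ 2 / 2 by norm_num; ring]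
    exact ((hasSum_nat_add_iff' 1).mpr hasSum_inv_add_half_sq).add hasSum_inv_add_half_sq
  | succ p ih =>
    set α : ℝ := p + 1 / 2
    have h : (fun k : ℕ ↦ ((k : ℝ) + 1 + ((p + 1 : ℕ) + 1 / 2))⁻¹ ^ 2
        + ((k : ℝ) + 1 - ((p + 1 : ℕ) + 1 / 2))⁻¹ ^ 2) = fun k : ℕ ↦
        ((k : ℝ) + 1 + α)⁻¹ ^ 2 + ((k : ℝ) + 1 - α)⁻¹ ^ 2
        - (((k : ℝ) + (α + 1))⁻¹ ^ 2 - ((k : ℝ) + 1 + (α + 1))⁻¹ ^ 2)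
        + (((k : ℝ) + -α)⁻¹ ^ 2 - ((k : ℝ) + 1 + -α)⁻¹ ^ 2) := by
      ext k; simp only [α]; push_cast; ring
    rw [h, show π ^ 2 - (((p + 1 : ℕ) : ℝ) + 1 / 2)⁻¹ ^ 2
        = π ^ 2 - α⁻¹ ^ 2 - (α + 1)⁻¹ ^ 2 + (-α)⁻¹ ^ 2 by rw [inv_neg, neg_sq]; push_cast; ring]
    exact (ih.sub (hasSum_inv_add_sq_sub_inv_add_succ_sq _)).add
      (hasSum_inv_add_sq_sub_inv_add_succ_sq _)

theorem natCast_add_one_sub_add_half_ne_zero (k p : ℕ) : (k : ℝ) + 1 - (p + 1 / 2) ≠ 0 := by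
  intro h
  have : ((2 * k + 1 : ℕ) : ℝ) = (2 * p : ℕ) := by push_cast; linarith
  have : 2 * k + 1 = 2 * p := by exact_mod_cast this
  omega

theorem column_sq {α : ℝ} {k : ℕ} (hα : α ≠ 0) (h₁ : (k : ℝ) + 1 + α ≠ 0)
    (h₂ : (k : ℝ) + 1 - α ≠ 0) :
    column α k ^ 2 = ((k : ℝ) + 1 + α)⁻¹ ^ 2 + ((k : ℝ) + 1 - α)⁻¹ ^ 2 + α⁻¹ * column α k := by
  rw [column]
  field_simp
  ring

theorem column_mul_column {α β : ℝ} {k : ℕ} (hαβ : β ^ 2 - α ^ 2 ≠ 0)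
    (hα₁ : (k : ℝ) + 1 + α ≠ 0) (hα₂ : (k : ℝ) + 1 - α ≠ 0)
    (hβ₁ : (k : ℝ) + 1 + β ≠ 0) (hβ₂ : (k : ℝ) + 1 - β ≠ 0) :
    column α k * column β k = (2 * β * column α k - 2 * α * column β k) / (β ^ 2 - α ^ 2) := by
  rw [column, column]
  field_simp
  ring

theorem hasSum_column_mul_column (p q : ℕ) :
    HasSum (fun k ↦ column (p + 1 / 2) k * column (q + 1 / 2) k)
      ((if p = q then π ^ 2 else 0) - 2 * (((p : ℝ) + 1 / 2)⁻¹ * ((q : ℝ) + 1 / 2)⁻¹)) := by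
  have h₁ (r k : ℕ) : (k : ℝ) + 1 + (r + 1 / 2) ≠ 0 := by positivity
  have h₂ := natCast_add_one_sub_add_half_ne_zero
  by_cases hpq : p = q
  · subst hpq
    have h := (hasSum_inv_sq_add_inv_sq p).add ((hasSum_column p).mul_left ((p : ℝ) + 1 / 2)⁻¹)
    simp_rw [← column_sq (by positivity) (h₁ p _) (h₂ _ p)] at h
    rw [if_pos rfl]
    convert h using 1
    · simp_rw [sq]
    · ring
  · have hpq' : ((q : ℝ) + 1 / 2) ^ 2 - ((p : ℝ) + 1 / 2) ^ 2 ≠ 0 := by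
      rw [sq_sub_sq]
      exact mul_ne_zero (by positivity) (sub_ne_zero.mpr (by simpa using Ne.symm hpq))
    simp_rw [if_neg hpq, column_mul_column hpq' (h₁ p _) (h₂ _ p) (h₁ q _) (h₂ _ q)]
    set α : ℝ := p + 1 / 2
    set β : ℝ := q + 1 / 2
    have hα : α ≠ 0 := by positivity
    have hβ : β ≠ 0 := by positivity
    rw [show 0 - 2 * (α⁻¹ * β⁻¹) = (2 * β * -α⁻¹ - 2 * α * -β⁻¹) / (β ^ 2 - α ^ 2) by
      field_simp; ring]
    exact (((hasSum_column p).mul_left (2 * β)).sub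
      ((hasSum_column q).mul_left (2 * α))).div_const _

noncomputable def columnLp (n : ℕ) : lp (fun _ : ℕ ↦ ℝ) 2 :=
  ⟨column ((n + 1 : ℕ) + 1 / 2), memℓp_two_iff_summable_sq.mpr <| by
    simpa [sq] using (hasSum_column_mul_column (n + 1) (n + 1)).summable⟩

theorem inner_columnLp (m n : ℕ) :
    inner ℝ (columnLp m) (columnLp n) = (if m = n then π ^ 2 else 0)
      - 2 * ((((m + 1 : ℕ) : ℝ) + 1 / 2)⁻¹ * (((n + 1 : ℕ) : ℝ) + 1 / 2)⁻¹) := by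
  have h := (hasSum_column_mul_column (m + 1) (n + 1)).tsum_eq
  simp only [Nat.add_right_cancel_iff] at h
  rw [lp.inner_eq_tsum, ← h]
  simp [columnLp, mul_comm]

end AMat

/-- Sequences are indexed from `0`: `x n` stands for `x_{n+1}`. -/
theorem aMat_isometry_on_orthocomplement
    (x : ℕ → ℝ) (hx : Summable fun n : ℕ => (x n) ^ 2)
    (hx0 : (∑' n : ℕ, x n / ((n : ℝ) + 1 + 1 / 2)) = 0) :
    Real.sqrt (∑' k : ℕ, (∑' n : ℕ, aMat (k + 1) (n + 1) * x n) ^ 2)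
      = Real.pi * Real.sqrt (∑' n : ℕ, (x n) ^ 2) := by
  have hv : Summable fun n : ℕ ↦ (((n + 1 : ℕ) : ℝ) + 1 / 2)⁻¹ ^ 2 :=
    (summable_nat_add_iff 1).mpr hasSum_inv_add_half_sq.summable
  have hx0' : ∑' n, x n * (((n + 1 : ℕ) : ℝ) + 1 / 2)⁻¹ = 0 := by
    simpa [div_eq_mul_inv] using hx0
  have hAx (k : ℕ) : (∑' n, x n • AMat.columnLp n) k = ∑' n, aMat (k + 1) (n + 1) * x n := by
    rw [lp.tsum_apply (summable_smul_of_inner_eq AMat.inner_columnLp zero_le_two hx)]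
    simp [AMat.columnLp, AMat.aMat_eq_column, mul_comm]
  simp_rw [← hAx, ← lp.norm_sq_eq_tsum_sq, norm_sq_tsum_smul_of_inner_eq AMat.inner_columnLp
    zero_le_two hx (summable_mul_of_summable_sq hx hv), hx0']
  rw [zero_pow two_ne_zero, mul_zero, sub_zero, Real.sqrt_mul (sq_nonneg π),
    Real.sqrt_sq pi_pos.le]
end
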